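/- The elements (1 - yx)·x^i, for i ≥ 0, are linearly independent in the Jacobson algebra A = ⟨x, y | xy = 1⟩; consequently the right ideal (1-yx)A is infinite dimensional over F. -/
import Mathlib


/-- The defining relation of the Jacobson algebra `⟨x, y | xy = 1⟩`. -/
inductive JacobsonRel (F : Type*) [Field F] :
    FreeAlgebra F (Fin 2) → FreeAlgebra F (Fin 2) → Prop
  | rel : JacobsonRel F (FreeAlgebra.ι F 0 * FreeAlgebra.ι F 1) 1

/-- The Jacobson algebra `A = ⟨x, y | xy = 1⟩` over `F`. -/
abbrev Jacobson (F : Type*) [Field F] := RingQuot (JacobsonRel F)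

noncomputable def jx (F : Type*) [Field F] : Jacobson F :=
  RingQuot.mkRingHom (JacobsonRel F) (FreeAlgebra.ι F 0)

noncomputable def jy (F : Type*) [Field F] : Jacobson F :=
  RingQuot.mkRingHom (JacobsonRel F) (FreeAlgebra.ι F 1)

section Rep

variable (F : Type*) [Field F]

/-- Shift-down operator: `e n ↦ e (n-1)`, `e 0 ↦ 0`. -/
noncomputable def shiftX : (ℕ →₀ F) →ₗ[F] (ℕ →₀ F) :=
  Finsupp.lsum F fun n => if n = 0 then 0 else Finsupp.lsingle (n - 1)

/-- Shift-up operator: `e n ↦ e (n+1)`. -/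
noncomputable def shiftY : (ℕ →₀ F) →ₗ[F] (ℕ →₀ F) :=
  Finsupp.lsum F fun n => Finsupp.lsingle (n + 1)

lemma shiftX_single (n : ℕ) (c : F) :
    shiftX F (Finsupp.single n c) = if n = 0 then 0 else Finsupp.single (n - 1) c := by
  simp [shiftX]
  split <;> simp

lemma shiftY_single (n : ℕ) (c : F) :
    shiftY F (Finsupp.single n c) = Finsupp.single (n + 1) c := by
  simp [shiftY]

lemma shiftXY : (shiftX F) * (shiftY F) = 1 := by
  apply Finsupp.lhom_ext
  intro n c
  simp [Module.End.mul_apply, shiftY_single, shiftX_single]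

/-- The representation of the Jacobson algebra on `ℕ →₀ F`. -/
noncomputable def jrep : Jacobson F →ₐ[F] Module.End F (ℕ →₀ F) :=
  RingQuot.liftAlgHom F ⟨FreeAlgebra.lift F ![shiftX F, shiftY F], by
    intro a b h
    cases h
    simp [shiftXY]⟩

lemma jx_eq : jx F = RingQuot.mkAlgHom F (JacobsonRel F) (FreeAlgebra.ι F 0) := by
  unfold jx; rw [← RingQuot.mkAlgHom_coe F (JacobsonRel F)]; rfl

lemma jy_eq : jy F = RingQuot.mkAlgHom F (JacobsonRel F) (FreeAlgebra.ι F 1) := by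
  unfold jy; rw [← RingQuot.mkAlgHom_coe F (JacobsonRel F)]; rfl

lemma jrep_jx : jrep F (jx F) = shiftX F := by
  rw [jx_eq, jrep, RingQuot.liftAlgHom_mkAlgHom_apply]; simp

lemma jrep_jy : jrep F (jy F) = shiftY F := by
  rw [jy_eq, jrep, RingQuot.liftAlgHom_mkAlgHom_apply]; simp

lemma shiftX_pow_single (i n : ℕ) :
    ((shiftX F) ^ i) (Finsupp.single n (1 : F)) =
      if i ≤ n then Finsupp.single (n - i) (1 : F) else 0 := by
  induction i generalizing n with
  | zero => simp
  | succ i ih =>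
    rw [pow_succ, Module.End.mul_apply, shiftX_single]
    by_cases h0 : n = 0
    · rw [if_pos h0, map_zero, if_neg (by omega)]
    · rw [if_neg h0, ih]
      by_cases h : i + 1 ≤ n
      · rw [if_pos (by omega), if_pos h]; congr 1; omega
      · rw [if_neg (by omega), if_neg h]

lemma key_apply (i n : ℕ) :
    (jrep F ((1 - jy F * jx F) * jx F ^ i)) (Finsupp.single n (1 : F)) =
      if n = i then Finsupp.single 0 (1 : F) else 0 := by
  rw [map_mul, map_pow, map_sub, map_mul, map_one, jrep_jx, jrep_jy,
    Module.End.mul_apply, shiftX_pow_single]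
  rcases le_or_gt i n with h | h
  · rw [if_pos h, LinearMap.sub_apply, Module.End.one_apply, Module.End.mul_apply, shiftX_single]
    rcases eq_or_ne n i with he | he
    · rw [if_pos (by omega), map_zero, if_pos he, sub_zero]
      subst he; simp
    · rw [if_neg (by omega), shiftY_single, if_neg he, sub_eq_zero]
      congr 1; omega
  · rw [if_neg (by omega), map_zero, if_neg (by omega)]

theorem jacobson_li :
    LinearIndependent F (fun i : ℕ => (1 - jy F * jx F) * jx F ^ i) := by
  rw [linearIndependent_iff]
  intro l hl
  ext n
  have h0 : (jrep F) (Finsupp.linearCombination F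
      (fun i : ℕ => (1 - jy F * jx F) * jx F ^ i) l) = 0 := by
    rw [hl, map_zero]
  rw [Finsupp.linearCombination_apply, Finsupp.sum, map_sum] at h0
  have h1 := congrArg (fun f : Module.End F (ℕ →₀ F) => f (Finsupp.single n (1 : F))) h0
  simp only [map_smul, LinearMap.zero_apply] at h1
  rw [LinearMap.sum_apply] at h1
  simp only [LinearMap.smul_apply, key_apply] at h1
  rw [Finset.sum_eq_single n (fun i _ hi => by rw [if_neg (Ne.symm hi), smul_zero])
    (fun hn => by rw [Finsupp.notMem_support_iff.mp hn, zero_smul])] at h1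
  rw [if_pos rfl, Finsupp.smul_single, smul_eq_mul, mul_one] at h1
  simpa using congrArg (fun f : ℕ →₀ F => f 0) h1

end Rep

/-- The elements `(1 - yx) x^i`, `i ≥ 0`, are linearly independent, and
consequently the right ideal `(1 - yx) A` is infinite dimensional over `F`. -/
theorem jacobson_one_sub_e_right_ideal_infinite (F : Type*) [Field F] :
    LinearIndependent F (fun i : ℕ => (1 - jy F * jx F) * jx F ^ i) ∧
      ¬ FiniteDimensional F
        ↥(Submodule.span F {z : Jacobson F | ∃ a, z = (1 - jy F * jx F) * a}) := by
  refine ⟨jacobson_li F, ?_⟩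
  intro hfd
  set S := Submodule.span F {z : Jacobson F | ∃ a, z = (1 - jy F * jx F) * a}
  have hmem : ∀ i : ℕ, (1 - jy F * jx F) * jx F ^ i ∈ S :=
    fun i => Submodule.subset_span ⟨jx F ^ i, rfl⟩
  have hli : LinearIndependent F (fun i : ℕ => (⟨(1 - jy F * jx F) * jx F ^ i, hmem i⟩ : S)) := by
    apply LinearIndependent.of_comp S.subtype
    exact jacobson_li F
  exact Module.Finite.not_linearIndependent_of_infinite _ hli
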